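/- arXiv:1810.07606 — 2 statements merged into one kernel-verified Lean document; each statement's English description precedes it below -/
import Mathlib

section
/- Fix M > 0 and λ > 0. There exists ε₀ > 0 such that for every ε ∈ (0, ε₀), setting A := 2(c − ε^λ)/M and h(η) := (1/A)·( G(A·η − c + ε^λ) − G(c − ε^λ) ) for η ∈ [0,M], the function h satisfies: h is three times continuously differentiable on [0,M]; h(0) = h(M) = 0; h(M − η) = h(η) for all η ∈ [0,M]; h(η) ≥ h(M/2) = −G(c − ε^λ)/A for all η ∈ [0,M]; and h(M/2) → −M·G(c)/(2c) as ε → 0⁺. -/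
open Set Filter Function MeasureTheory intervalIntegral
open scoped Topology

/-!
By the inverse function theorem `g = Φ⁻¹` is `C²` on `(-c, c)`, so its primitive `G` is `C³`
there; `g` is odd and nonnegative on `[0, c)`, so `G` is even with minimum `G 0 = 0`. The
profile `h` is `G` composed with the affine bijection `[0, M] → [-b, b]`, `b = c - ε^λ`, which
gives symmetry about `M / 2` and the minimum there. For the limit, comparing `Φ` with the
antiderivative of the bound `C₀ y^(-α-1)` gives `c - Φ y ≤ (C₀/α) y^(-α)`, hence
`g s = O((c - s)^(-1/α))` as `s → c`; since `α > 1` this is integrable, so `G` is continuous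
up to `c`.
-/

theorem ContDiffAt.invFun {𝕂 : Type*} [RCLike 𝕂] {f : 𝕂 → 𝕂} {n : WithTop ℕ∞} {a : 𝕂}
    (hf : ContDiffAt 𝕂 n f a) (hn : n ≠ 0) (hinj : Injective f) (hf' : deriv f a ≠ 0) :
    ContDiffAt 𝕂 n (Function.invFun f) (f a) := by
  let i : 𝕂 ≃L[𝕂] 𝕂 := .unitsEquivAut 𝕂 (.mk0 _ hf')
  have hfd : HasFDerivAt f (i : 𝕂 →L[𝕂] 𝕂) a := (hf.differentiableAt hn).hasDerivAt
  refine (hf.to_localInverse hfd hn).congr_of_eventuallyEq ?_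
  filter_upwards [(hf.hasStrictFDerivAt' hfd hn).eventually_right_inverse] with y hy
  conv_lhs => rw [← hy]
  exact leftInverse_invFun hinj _

theorem contDiffOn_primitive {f : ℝ → ℝ} {n : ℕ∞} {a b x₀ : ℝ} (hf : ContDiffOn ℝ n f (Ioo a b))
    (hx₀ : x₀ ∈ Ioo a b) : ContDiffOn ℝ (n + 1) (fun u => ∫ s in x₀..u, f s) (Ioo a b) := by
  have hderiv : ∀ u ∈ Ioo a b, HasDerivAt (fun u => ∫ s in x₀..u, f s) (f u) u := fun u hu =>
    integral_hasDerivAt_right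
      ((hf.continuousOn.mono (ordConnected_Ioo.uIcc_subset hx₀ hu)).intervalIntegrable)
      (hf.continuousOn.stronglyMeasurableAtFilter isOpen_Ioo u hu)
      (hf.continuousOn.continuousAt (isOpen_Ioo.mem_nhds hu))
  rw [contDiffOn_succ_iff_deriv_of_isOpen isOpen_Ioo]
  exact ⟨fun u hu => (hderiv u hu).differentiableAt.differentiableWithinAt, by simp,
    hf.congr fun u hu => (hderiv u hu).deriv⟩

theorem integral_zero_neg_of_odd {f : ℝ → ℝ} {u : ℝ} (hodd : ∀ x ∈ uIcc 0 u, f (-x) = -f x) :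
    ∫ x in 0..-u, f x = ∫ x in 0..u, f x := by
  have h := integral_comp_neg (a := 0) (b := u) f
  rw [integral_congr hodd, intervalIntegral.integral_neg, neg_zero, integral_symm 0 (-u)] at h
  linarith

theorem integral_zero_nonneg_of_odd {f : ℝ → ℝ} {u : ℝ} (hodd : ∀ x ∈ uIcc 0 u, f (-x) = -f x)
    (hnn : ∀ x ∈ Icc 0 |u|, 0 ≤ f x) : 0 ≤ ∫ x in 0..u, f x := by
  rcases le_or_gt 0 u with hu | hu
  · rw [abs_of_nonneg hu] at hnn
    exact integral_nonneg hu hnn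
  · rw [abs_of_neg hu] at hnn
    rw [← integral_zero_neg_of_odd hodd]
    exact integral_nonneg (by linarith) hnn

theorem continuousWithinAt_primitive_Iic {f : ℝ → ℝ} {c : ℝ} (hc : 0 < c)
    (hf : IntervalIntegrable f volume 0 c) :
    ContinuousWithinAt (fun u => ∫ s in 0..u, f s) (Iic c) c := by
  have := continuousOn_primitive_interval' hf left_mem_uIcc c right_mem_uIcc
  rwa [uIcc_of_le hc.le, continuousWithinAt_Icc_iff_Iic hc] at this

section RealInverse

variable {Φ : ℝ → ℝ} {c : ℝ}

theorem Ioo_subset_range_of_odd (hcont : Continuous Φ)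
    (hodd : ∀ y, Φ (-y) = -Φ y) (hlim : Tendsto Φ atTop (𝓝 c)) : Ioo (-c) c ⊆ range Φ := by
  intro v ⟨hlo, hhi⟩
  obtain ⟨b, hb⟩ := (hlim.eventually (eventually_gt_nhds hhi)).exists
  obtain ⟨a, ha⟩ := (hlim.eventually (eventually_gt_nhds (neg_lt.1 hlo))).exists
  refine intermediate_value_univ (-a) b hcont ⟨?_, hb.le⟩
  rw [hodd]; linarith

theorem invFun_neg_of_odd (hinj : Injective Φ) (hodd : ∀ y, Φ (-y) = -Φ y)
    {s : ℝ} (hs : s ∈ range Φ) : invFun Φ (-s) = -invFun Φ s := by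
  conv_lhs => rw [← invFun_eq hs, ← hodd]
  exact leftInverse_invFun hinj _

theorem invFun_le_of_le_apply (hmono : StrictMono Φ) {s y : ℝ} (hs : s ∈ range Φ)
    (h : s ≤ Φ y) : invFun Φ s ≤ y := by
  rwa [← hmono.le_iff_le, invFun_eq hs]

theorem invFun_nonneg (hmono : StrictMono Φ) (hΦ0 : Φ 0 = 0) {s : ℝ}
    (hs : s ∈ range Φ) (hs0 : 0 ≤ s) : 0 ≤ invFun Φ s := by
  rwa [← hmono.le_iff_le, invFun_eq hs, hΦ0]

theorem contDiffOn_invFun {n : WithTop ℕ∞} {U : Set ℝ} (hΦ : ContDiff ℝ n Φ)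
    (hn : n ≠ 0) (hinj : Injective Φ) (hΦ' : ∀ y, deriv Φ y ≠ 0) (hU : U ⊆ range Φ) :
    ContDiffOn ℝ n (invFun Φ) U := by
  rintro _ hs
  obtain ⟨y, rfl⟩ := hU hs
  exact (hΦ.contDiffAt.invFun hn hinj (hΦ' y)).contDiffWithinAt

theorem invFun_neg_of_mem_uIcc (hinj : Injective Φ) (hodd : ∀ y, Φ (-y) = -Φ y)
    (hrange : Ioo (-c) c ⊆ range Φ) {u : ℝ} (hu : u ∈ Ioo (-c) c) :
    ∀ s ∈ uIcc 0 u, invFun Φ (-s) = -invFun Φ s := by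
  have h0 : (0 : ℝ) ∈ Ioo (-c) c := ⟨by linarith [hu.1, hu.2], by linarith [hu.1, hu.2]⟩
  exact fun _ hs => invFun_neg_of_odd hinj hodd (hrange (ordConnected_Ioo.uIcc_subset h0 hu hs))

theorem sub_le_of_deriv_le_rpow {C α y₀ : ℝ} (hΦ : Differentiable ℝ Φ)
    (hlim : Tendsto Φ atTop (𝓝 c)) (hα : 0 < α) (hy₀ : 0 < y₀)
    (hdecay : ∀ y, y₀ ≤ y → deriv Φ y ≤ C * y ^ (-α - 1)) {y : ℝ} (hy : y₀ ≤ y) :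
    c - Φ y ≤ C / α * y ^ (-α) := by
  set ψ : ℝ → ℝ := fun z => Φ z + C / α * z ^ (-α)
  have hψ' : ∀ z, 0 < z → HasDerivAt ψ (deriv Φ z - C * z ^ (-α - 1)) z := by
    intro z hz
    refine ((hΦ z).hasDerivAt.add ((Real.hasDerivAt_rpow_const (p := -α)
      (Or.inl hz.ne')).const_mul (C / α))).congr_deriv ?_
    field_simp
    ring
  have hanti : AntitoneOn ψ (Ici y₀) := by
    refine antitoneOn_of_deriv_nonpos (convex_Ici y₀) ?_ ?_ ?_
    · exact fun z hz => (hψ' z (hy₀.trans_le hz)).continuousAt.continuousWithinAt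
    · intro z hz
      rw [interior_Ici] at hz
      exact (hψ' z (hy₀.trans hz)).differentiableAt.differentiableWithinAt
    · intro z hz
      rw [interior_Ici] at hz
      rw [(hψ' z (hy₀.trans hz)).deriv]
      linarith [hdecay z hz.le]
  have hψlim : Tendsto ψ atTop (𝓝 c) := by
    simpa using hlim.add ((tendsto_rpow_neg_atTop hα).const_mul (C / α))
  have : c ≤ ψ y := le_of_tendsto hψlim
    (eventually_atTop.2 ⟨y, fun z hz => hanti hy (hy.trans hz) hz⟩)
  linarith

theorem invFun_le_add_rpow {K α y₀ s : ℝ} (hmono : StrictMono Φ) (hK : 0 < K)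
    (hα : 0 < α) (hy₀ : 0 ≤ y₀) (htail : ∀ y, y₀ ≤ y → c - Φ y ≤ K * y ^ (-α))
    (hs : s ∈ range Φ) (hsc : s < c) :
    invFun Φ s ≤ y₀ + K ^ α⁻¹ * (c - s) ^ (-α⁻¹) := by
  set z := K ^ α⁻¹ * (c - s) ^ (-α⁻¹)
  have hcs : 0 < c - s := by linarith
  have hz : 0 < z := by positivity
  have hzα : K * z ^ (-α) = c - s := by
    have e₁ : α⁻¹ * -α = -1 := by field_simp
    have e₂ : -α⁻¹ * -α = 1 := by field_simp
    rw [Real.mul_rpow (by positivity) (by positivity), ← Real.rpow_mul hK.le,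
      ← Real.rpow_mul hcs.le, e₁, e₂, Real.rpow_neg_one, Real.rpow_one]
    field_simp
  have hle : s ≤ Φ (max y₀ z) := by
    have h1 := htail _ (le_max_left y₀ z)
    have h2 : K * max y₀ z ^ (-α) ≤ K * z ^ (-α) := by
      gcongr ?_ * ?_
      exact Real.rpow_le_rpow_of_nonpos hz (le_max_right _ _) (neg_nonpos.2 hα.le)
    linarith
  calc invFun Φ s ≤ max y₀ z := invFun_le_of_le_apply hmono hs hle
    _ ≤ y₀ + z := max_le (by linarith) (by linarith)

theorem intervalIntegrable_invFun {K α y₀ : ℝ} (hmono : StrictMono Φ)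
    (hΦ0 : Φ 0 = 0) (hrange : Ioo 0 c ⊆ range Φ) (hcont : ContinuousOn (invFun Φ) (Ioo 0 c))
    (hc : 0 < c) (hK : 0 < K) (hα : 1 < α) (hy₀ : 0 ≤ y₀)
    (htail : ∀ y, y₀ ≤ y → c - Φ y ≤ K * y ^ (-α)) :
    IntervalIntegrable (invFun Φ) volume 0 c := by
  have hdom : IntervalIntegrable (fun s => y₀ + K ^ α⁻¹ * (c - s) ^ (-α⁻¹)) volume 0 c := by
    have hr : -1 < -α⁻¹ := neg_lt_neg (inv_lt_one_of_one_lt₀ hα)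
    have h := (intervalIntegrable_rpow' hr (a := 0) (b := c)).comp_sub_left c
    simp only [sub_zero, sub_self] at h
    exact intervalIntegrable_const.add (h.symm.const_mul _)
  rw [intervalIntegrable_iff_integrableOn_Ioo_of_le hc.le] at hdom ⊢
  refine hdom.mono' (hcont.aestronglyMeasurable measurableSet_Ioo) ?_
  filter_upwards [ae_restrict_mem measurableSet_Ioo] with s hs
  rw [Real.norm_of_nonneg (invFun_nonneg hmono hΦ0 (hrange hs) hs.1.le)]
  exact invFun_le_add_rpow hmono hK (by linarith) hy₀ htail (hrange hs) hs.2

end RealInverse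

noncomputable def profile (G : ℝ → ℝ) (b M η : ℝ) : ℝ :=
  1 / (2 * b / M) * (G (2 * b / M * η - b) - G b)

section Profile

variable {G : ℝ → ℝ} {b M : ℝ}

theorem profile_arg_mem_Icc (hb : 0 ≤ b) (hM : 0 < M) {η : ℝ} (hη : η ∈ Icc 0 M) :
    2 * b / M * η - b ∈ Icc (-b) b := by
  have h : 2 * b / M * η ≤ 2 * b := by
    rw [div_mul_eq_mul_div, div_le_iff₀ hM]; nlinarith [hη.2]
  constructor <;> nlinarith [hη.1, div_nonneg (mul_nonneg zero_le_two hb) hM.le]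

theorem profile_zero (hG : G (-b) = G b) : profile G b M 0 = 0 := by
  simp [profile, hG]

theorem profile_self (hM : M ≠ 0) : profile G b M M = 0 := by
  simp [profile, div_mul_cancel₀ _ hM, two_mul]

theorem profile_half (hM : M ≠ 0) (hG0 : G 0 = 0) : profile G b M (M / 2) = -G b / (2 * b / M) := by
  rw [profile, show 2 * b / M * (M / 2) - b = 0 by field_simp; ring, hG0]
  ring

theorem profile_sub (hb : 0 ≤ b) (hM : 0 < M) (heven : ∀ u ∈ Icc (-b) b, G (-u) = G u) {η : ℝ}
    (hη : η ∈ Icc 0 M) : profile G b M (M - η) = profile G b M η := by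
  rw [profile, profile, ← heven _ (profile_arg_mem_Icc hb hM hη)]
  congr 3
  field_simp
  ring

theorem profile_half_le (hb : 0 < b) (hM : 0 < M) (hmin : ∀ u ∈ Icc (-b) b, G 0 ≤ G u) {η : ℝ}
    (hη : η ∈ Icc 0 M) : profile G b M (M / 2) ≤ profile G b M η := by
  rw [profile, profile, show 2 * b / M * (M / 2) - b = 0 by field_simp; ring]
  gcongr
  exact hmin _ (profile_arg_mem_Icc hb.le hM hη)

theorem contDiffOn_profile {n : WithTop ℕ∞} (hb : 0 ≤ b) (hM : 0 < M)
    (hG : ContDiffOn ℝ n G (Icc (-b) b)) : ContDiffOn ℝ n (profile G b M) (Icc 0 M) :=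
  contDiffOn_const.mul ((hG.comp (by fun_prop) fun _ hη => profile_arg_mem_Icc hb hM hη).sub
    contDiffOn_const)

end Profile

theorem tendsto_sub_rpow_nhdsGT_zero {c lam : ℝ} (hlam : 0 < lam) :
    Tendsto (fun ε : ℝ => c - ε ^ lam) (𝓝[>] 0) (𝓝[≤] c) := by
  refine tendsto_nhdsWithin_iff.2 ⟨?_, ?_⟩
  · have h := ((Real.continuousAt_rpow_const 0 lam (Or.inr hlam.le)).tendsto).mono_left
      (nhdsWithin_le_nhds (s := Ioi 0))
    simpa [Real.zero_rpow hlam.ne'] using tendsto_const_nhds.sub h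
  · filter_upwards [self_mem_nhdsWithin] with ε hε
    exact sub_le_self c (Real.rpow_nonneg (le_of_lt hε) lam)

theorem sub_rpow_mem_Ioo {c lam ε : ℝ} (hc : 0 < c) (hlam : 0 < lam)
    (hε : ε ∈ Ioo 0 (c ^ lam⁻¹)) : c - ε ^ lam ∈ Ioo 0 c := by
  have h := Real.rpow_lt_rpow hε.1.le hε.2 hlam
  rw [← Real.rpow_mul hc.le, inv_mul_cancel₀ hlam.ne', Real.rpow_one] at h
  constructor <;> linarith [Real.rpow_pos_of_pos hε.1 lam]

theorem stmt_7 (c α : ℝ) (hc : 0 < c) (hα : 2 ≤ α)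
    (Φ : ℝ → ℝ) (hΦ : ContDiff ℝ 2 Φ)
    (hodd : ∀ y : ℝ, Φ (-y) = -Φ y)
    (hΦ' : ∀ y : ℝ, 0 < deriv Φ y)
    (hlim : Filter.Tendsto Φ Filter.atTop (nhds c))
    (C₀ y₀ : ℝ) (hC₀ : 0 < C₀) (hy₀ : 0 < y₀)
    (hdecay : ∀ y : ℝ, y₀ ≤ y → deriv Φ y ≤ C₀ * y ^ (-α - 1))
    (M lam : ℝ) (hM : 0 < M) (hlam : 0 < lam) :
    let g : ℝ → ℝ := Function.invFun Φ
    let G : ℝ → ℝ := fun u => ∫ s in (0:ℝ)..u, g s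
    ∃ ε₀ > (0:ℝ),
      (∀ ε ∈ Set.Ioo (0:ℝ) ε₀,
        let A : ℝ := 2 * (c - ε ^ lam) / M
        let h : ℝ → ℝ := fun η => (1 / A) * (G (A * η - c + ε ^ lam) - G (c - ε ^ lam))
        ContDiffOn ℝ 3 h (Set.Icc 0 M) ∧
        h 0 = 0 ∧ h M = 0 ∧
        (∀ η ∈ Set.Icc (0:ℝ) M, h (M - η) = h η) ∧
        (∀ η ∈ Set.Icc (0:ℝ) M, h (M / 2) ≤ h η) ∧
        h (M / 2) = -(G (c - ε ^ lam)) / A) ∧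
      Filter.Tendsto
        (fun ε : ℝ => -(G (c - ε ^ lam)) / (2 * (c - ε ^ lam) / M))
        (nhdsWithin 0 (Set.Ioi 0)) (nhds (-(M * G c) / (2 * c))) := by
  intro g G
  have hmono : StrictMono Φ := strictMono_of_deriv_pos hΦ'
  have hΦ0 : Φ 0 = 0 := CharZero.eq_neg_self_iff.1 (by simpa using hodd 0)
  have hrange := Ioo_subset_range_of_odd hΦ.continuous hodd hlim
  have hg : ContDiffOn ℝ 2 g (Ioo (-c) c) :=
    contDiffOn_invFun hΦ two_ne_zero hmono.injective (fun y => (hΦ' y).ne') hrange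
  have hG : ContDiffOn ℝ 3 G (Ioo (-c) c) := contDiffOn_primitive hg ⟨neg_lt_zero.2 hc, hc⟩
  have hgodd {u : ℝ} (hu : u ∈ Ioo (-c) c) : ∀ s ∈ uIcc 0 u, g (-s) = -g s :=
    invFun_neg_of_mem_uIcc hmono.injective hodd hrange hu
  have hGeven (u : ℝ) (hu : u ∈ Ioo (-c) c) : G (-u) = G u := integral_zero_neg_of_odd (hgodd hu)
  have hGnonneg (u : ℝ) (hu : u ∈ Ioo (-c) c) : 0 ≤ G u :=
    integral_zero_nonneg_of_odd (hgodd hu) fun s hs => invFun_nonneg hmono hΦ0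
      (hrange ⟨by linarith [hs.1], hs.2.trans_lt (abs_lt.2 hu)⟩) hs.1
  have hgint : IntervalIntegrable g volume 0 c :=
    intervalIntegrable_invFun hmono hΦ0 ((Ioo_subset_Ioo_left (by linarith)).trans hrange)
      (hg.continuousOn.mono (Ioo_subset_Ioo_left (by linarith))) hc (div_pos hC₀ (by linarith))
      (by linarith) hy₀.le fun y hy => sub_le_of_deriv_le_rpow (hΦ.differentiable two_ne_zero)
        hlim (by linarith) hy₀ hdecay hy
  refine ⟨c ^ lam⁻¹, by positivity, fun ε hε => ?_, ?_⟩
  · obtain ⟨hb, hbc⟩ := sub_rpow_mem_Ioo hc hlam hε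
    have hIcc : Icc (-(c - ε ^ lam)) (c - ε ^ lam) ⊆ Ioo (-c) c :=
      Icc_subset_Ioo (by linarith) hbc
    dsimp only
    simp only [sub_add]
    exact ⟨contDiffOn_profile hb.le hM (hG.mono hIcc),
      profile_zero (hGeven _ (hIcc (right_mem_Icc.2 (by linarith)))),
      profile_self hM.ne',
      fun η hη => profile_sub hb.le hM (fun u hu => hGeven u (hIcc hu)) hη,
      fun η hη => profile_half_le hb hM
        (fun u hu => integral_same.trans_le (hGnonneg u (hIcc hu))) hη,
      profile_half hM.ne' integral_same⟩
  · have hF : ContinuousWithinAt (fun b => -G b / (2 * b / M)) (Iic c) c :=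
      (continuousWithinAt_primitive_Iic hc hgint).neg.div
        (continuousWithinAt_const.mul continuousWithinAt_id |>.div_const M) (by positivity)
    rw [show -(M * G c) / (2 * c) = -G c / (2 * c / M) by field_simp]
    exact hF.tendsto.comp (tendsto_sub_rpow_nhdsGT_zero hlam)
end

section
/- Let M = 2c/a. If U : [0, M] → (0, ∞) is continuous on [0, M], continuously differentiable on (0, M), and satisfies U(κ)^m·U'(κ) = g(c − a·κ) for every κ ∈ (0, M), then U(M) = U(0). In particular, a traveling-wave profile with jump discontinuities at both endpoints of its support must take equal boundary values υ⁻ = υ⁺. -/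
/-!
Put `V = U ^ (m + 1)`, so that the equation reads `V' κ = (m + 1) g (c - a κ)`. The reflection
`κ ↦ M - κ` sends `c - a κ` to `-(c - a κ)` and `g` is odd, so `V'` is antisymmetric about `M / 2`.
Hence `κ ↦ V κ - V (M - κ)` has zero derivative on `(0, M)`, which forces `V M - V 0 = V 0 - V M`,
i.e. `U M ^ (m + 1) = U 0 ^ (m + 1)`.
-/

open Set Filter Topology Function

theorem Function.Odd.tendsto_atBot_neg {β : Type*} [TopologicalSpace β] [AddGroup β]
    [ContinuousNeg β] {f : ℝ → β} {c : β} (hf : f.Odd) (h : Tendsto f atTop (𝓝 c)) :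
    Tendsto f atBot (𝓝 (-c)) := by
  have := (h.comp tendsto_neg_atBot_atTop).neg
  simpa only [comp_def, hf.eq, neg_neg] using this

theorem Ioo_subset_range_of_tendsto {α : Type*} [LinearOrder α] [TopologicalSpace α]
    [OrderTopology α] {f : ℝ → α} {l u : α} (hf : Continuous f)
    (hbot : Tendsto f atBot (𝓝 l)) (htop : Tendsto f atTop (𝓝 u)) : Ioo l u ⊆ range f :=
  fun _ hx => mem_range_of_exists_le_of_exists_ge hf
    ((hbot.eventually (eventually_lt_nhds hx.1)).exists.imp fun _ => le_of_lt)
    ((htop.eventually (eventually_gt_nhds hx.2)).exists.imp fun _ => le_of_lt)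

theorem Function.Injective.invFun_neg_of_odd {α β : Type*} [Nonempty α] [Neg α] [Neg β]
    {f : α → β} (hinj : f.Injective) (hodd : f.Odd) {y : β} (hy : y ∈ range f) :
    invFun f (-y) = -invFun f y := by
  obtain ⟨x, rfl⟩ := hy
  rw [← hodd, leftInverse_invFun hinj, leftInverse_invFun hinj]

theorem eq_of_hasDerivAt_of_deriv_antisymm {f f' : ℝ → ℝ} {a b : ℝ} (hab : a ≤ b)
    (hf : ContinuousOn f (Icc a b)) (hff' : ∀ x ∈ Ioo a b, HasDerivAt f (f' x) x)
    (hanti : ∀ x ∈ Ioo a b, f' (a + b - x) = -f' x) : f b = f a := by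
  rcases hab.eq_or_lt with rfl | hlt
  · rfl
  set D : ℝ → ℝ := fun x => f x - f (a + b - x) with hD
  have hreflect : MapsTo (fun x => a + b - x) (Icc a b) (Icc a b) :=
    fun x hx => ⟨by linarith [hx.2], by linarith [hx.1]⟩
  have hDcont : ContinuousOn D (Icc a b) := hf.sub (hf.comp (by fun_prop) hreflect)
  have hD' : ∀ x ∈ Ioo a b, HasDerivAt D 0 x := by
    intro x hx
    have hx' : a + b - x ∈ Ioo a b := ⟨by linarith [hx.2], by linarith [hx.1]⟩
    have := (hff' x hx).sub ((hff' _ hx').comp_const_sub (a + b) x)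
    rwa [hanti x hx, neg_neg, sub_self] at this
  obtain ⟨_, _, hslope⟩ := exists_hasDerivAt_eq_slope D 0 hlt hDcont hD'
  rw [Pi.zero_apply, eq_div_iff (sub_pos.2 hlt).ne', zero_mul] at hslope
  simp only [hD, add_sub_cancel_left, add_sub_cancel_right] at hslope
  linarith

theorem stmt_19_general (c : ℝ) (hc : 0 < c)
    (Φ : ℝ → ℝ) (hΦ : ContDiff ℝ 2 Φ)
    (hodd : ∀ y : ℝ, Φ (-y) = -Φ y)
    (hΦ' : ∀ y : ℝ, 0 < deriv Φ y)
    (hlim : Filter.Tendsto Φ Filter.atTop (nhds c))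
    (a m : ℝ) (ha : 0 < a) (hm : 0 ≤ m)
    (U : ℝ → ℝ)
    (hpos : ∀ κ ∈ Set.Icc (0:ℝ) (2 * c / a), 0 < U κ)
    (hcont : ContinuousOn U (Set.Icc 0 (2 * c / a)))
    (hC1 : ContDiffOn ℝ 1 U (Set.Ioo 0 (2 * c / a)))
    (hODE : ∀ κ ∈ Set.Ioo (0:ℝ) (2 * c / a),
      (U κ) ^ m * deriv U κ = Function.invFun Φ (c - a * κ)) :
    U (2 * c / a) = U 0 := by
  set M := 2 * c / a with hM
  have haM : a * M = 2 * c := by rw [hM]; field_simp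
  have hM0 : 0 ≤ M := by positivity
  have hinj : Φ.Injective := (strictMono_of_deriv_pos hΦ').injective
  have hrange : ∀ κ ∈ Ioo 0 M, c - a * κ ∈ range Φ := fun κ hκ =>
    Ioo_subset_range_of_tendsto hΦ.continuous (Function.Odd.tendsto_atBot_neg hodd hlim) hlim
      ⟨by nlinarith [hκ.2], by nlinarith [hκ.1]⟩
  have hderiv : ∀ κ ∈ Ioo 0 M,
      HasDerivAt (fun x => U x ^ (m + 1)) ((m + 1) * invFun Φ (c - a * κ)) κ := by
    intro κ hκ
    have hU : HasDerivAt U (deriv U κ) κ :=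
      ((hC1.differentiableOn one_ne_zero κ hκ).differentiableAt
        (isOpen_Ioo.mem_nhds hκ)).hasDerivAt
    convert hU.rpow_const (p := m + 1) (Or.inl (hpos κ (Ioo_subset_Icc_self hκ)).ne') using 1
    rw [← hODE κ hκ, add_sub_cancel_right]
    ring
  have hpow : U M ^ (m + 1) = U 0 ^ (m + 1) := by
    refine eq_of_hasDerivAt_of_deriv_antisymm hM0
      (hcont.rpow_const fun κ hκ => Or.inl (hpos κ hκ).ne') hderiv fun κ hκ => ?_
    have hreflect : c - a * (0 + M - κ) = -(c - a * κ) := by linarith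
    rw [hreflect, hinj.invFun_neg_of_odd hodd (hrange κ hκ)]
    ring
  exact Real.rpow_left_injOn (by linarith) (hpos M ⟨hM0, le_rfl⟩).le (hpos 0 ⟨le_rfl, hM0⟩).le hpow

theorem stmt_19 (c α : ℝ) (hc : 0 < c) (hα : 2 ≤ α)
    (Φ : ℝ → ℝ) (hΦ : ContDiff ℝ 2 Φ)
    (hodd : ∀ y : ℝ, Φ (-y) = -Φ y)
    (hΦ' : ∀ y : ℝ, 0 < deriv Φ y)
    (hlim : Filter.Tendsto Φ Filter.atTop (nhds c))
    (C₀ y₀ : ℝ) (hC₀ : 0 < C₀) (hy₀ : 0 < y₀)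
    (hdecay : ∀ y : ℝ, y₀ ≤ y → deriv Φ y ≤ C₀ * y ^ (-α - 1))
    (a m : ℝ) (ha : 0 < a) (hm : 0 ≤ m)
    (U : ℝ → ℝ)
    (hpos : ∀ κ ∈ Set.Icc (0:ℝ) (2 * c / a), 0 < U κ)
    (hcont : ContinuousOn U (Set.Icc 0 (2 * c / a)))
    (hC1 : ContDiffOn ℝ 1 U (Set.Ioo 0 (2 * c / a)))
    (hODE : ∀ κ ∈ Set.Ioo (0:ℝ) (2 * c / a),
      (U κ) ^ m * deriv U κ = Function.invFun Φ (c - a * κ)) :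
    U (2 * c / a) = U 0 :=
  stmt_19_general c hc Φ hΦ hodd hΦ' hlim a m ha hm U hpos hcont hC1 hODE
end
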